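/- Let U, V ⊂ ℝ² be open, let Y ∈ C²(U; ℝ³) satisfy (DY)ᵀDY = Id_{2×2} on U, and let j ∈ C²(V; ℝ²) with j(V) ⊂ U. Then for every x ∈ V the pointwise identity |D²(Y∘j)(x)|² = |D²Y(j(x)) : (Dj(x)⊗Dj(x))|² + |D²j(x)|² holds, where D²Y : (Dj⊗Dj) denotes the ℝ³-valued bilinear form (u,v) ↦ D²Y(j(x))[Dj(x)u, Dj(x)v] and |·| are the natural Frobenius-type norms on the spaces of bilinear maps. -/

import Mathlib

open MeasureTheory Metric Real Filter Matrix
open scoped ENNReal Topology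

noncomputable section

/-- The plane `ℝ²` with the Euclidean norm. -/
abbrev E2 : Type := EuclideanSpace ℝ (Fin 2)
/-- The space `ℝ³` with the Euclidean norm. -/
abbrev E3 : Type := EuclideanSpace ℝ (Fin 3)

/-- The `i`-th standard basis vector of `ℝ²`. -/
def e2 (i : Fin 2) : E2 := EuclideanSpace.single i 1

/-- Partial derivative in the direction of the `i`-th coordinate. -/
def pd (i : Fin 2) (f : E2 → ℝ) (x : E2) : ℝ := fderiv ℝ f x (e2 i)

/-- Hessian matrix of a scalar function on `ℝ²`. -/
def hess (f : E2 → ℝ) (x : E2) : Matrix (Fin 2) (Fin 2) ℝ :=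
  Matrix.of fun i j => pd i (pd j f) x

/-- Derivative matrix `Dy ∈ ℝ^{3×2}` of a map `y : ℝ² → ℝ³`. -/
def Dmat (y : E2 → E3) (x : E2) : Matrix (Fin 3) (Fin 2) ℝ :=
  Matrix.of fun i j => pd j (fun z => y z i) x

/-- Induced metric `g_y = (Dy)ᵀ Dy`. -/
def gmet (y : E2 → E3) (x : E2) : Matrix (Fin 2) (Fin 2) ℝ :=
  (Dmat y x)ᵀ * Dmat y x

/-- The rotated vector `x⊥ = (-x₂, x₁)`. -/
def perpVec (x : E2) : Fin 2 → ℝ := ![-(x 1), x 0]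

/-- The unit tangent `x̂⊥ = (-x₂, x₁)/|x|`. -/
def xperpUnit (x : E2) : Fin 2 → ℝ := fun i => perpVec x i / ‖x‖

/-- The reference (cone) metric `g_Δ = Id - Δ² x̂⊥ ⊗ x̂⊥`. -/
def gDelta (Δ : ℝ) (x : E2) : Matrix (Fin 2) (Fin 2) ℝ :=
  1 - Matrix.of fun i j => (Δ ^ 2 / ‖x‖ ^ 2) * perpVec x i * perpVec x j

/-- Squared Frobenius norm of a matrix. -/
def frob2 {m n : Type*} [Fintype m] [Fintype n] (A : Matrix m n ℝ) : ℝ :=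
  ∑ i, ∑ j, (A i j) ^ 2

/-- `|D²y|²`: the sum of the squared Frobenius norms of the Hessians of the components. -/
def hessNormSq (y : E2 → E3) (x : E2) : ℝ :=
  ∑ i : Fin 3, frob2 (hess (fun z => y z i) x)

/-- The free elastic energy `I_{h,Δ}(y)`. -/
def energy (h Δ : ℝ) (y : E2 → E3) : ℝ :=
  ∫ x in ball (0 : E2) 1, (frob2 (gmet y x - gDelta Δ x) + h ^ 2 * hessNormSq y x)

/-- The singular cone `y^Δ(x) = √(1-Δ²)·(x,0) + Δ|x| e₃`. -/
def coneMap (Δ : ℝ) (x : E2) : E3 :=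
  (WithLp.equiv 2 (Fin 3 → ℝ)).symm
    ![Real.sqrt (1 - Δ ^ 2) * x 0, Real.sqrt (1 - Δ ^ 2) * x 1, Δ * ‖x‖]


/-- Derivative matrix `Dj ∈ ℝ^{2×2}` of a map `j : ℝ² → ℝ²`. -/
def Dmat2 (j : E2 → E2) (x : E2) : Matrix (Fin 2) (Fin 2) ℝ :=
  Matrix.of fun a b => pd b (fun z => j z a) x

/-- `|D²j|²` for a map `j : ℝ² → ℝ²`. -/
def hessNormSq2 (j : E2 → E2) (x : E2) : ℝ :=
  ∑ i : Fin 2, frob2 (hess (fun z => j z i) x)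

/-! By the chain rule, `∂ₐ∂_b (Y ∘ j)ⁱ = (Djᵀ D²Yⁱ Dj)ₐ_b + ∑_c ∂_c Yⁱ ∂ₐ∂_b jᶜ`.
Differentiating `(DY)ᵀ DY = Id` shows that `⟨∂ₖY, ∂ₘ∂ₙY⟩` changes sign when `k` and `n` are
swapped; being symmetric in `m, n`, it vanishes. So the first term is orthogonal in `ℝ³` to the
columns of `DY`, along which the second term lies, and since `DY` is an isometry the second
term has the norm of `D²j`. The identity is Pythagoras' theorem. -/

theorem fderiv_apply_eq_sum_pd (f : E2 → ℝ) (x v : E2) :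
    fderiv ℝ f x v = ∑ c, v c * pd c f x := by
  conv_lhs => rw [← (EuclideanSpace.basisFun (Fin 2) ℝ).sum_repr v]
  simp [pd, e2]

theorem pd_coord {j : E2 → E2} {x : E2} (hj : DifferentiableAt ℝ j x) (b c : Fin 2) :
    pd b (fun z => j z c) x = fderiv ℝ j x (e2 b) c := by
  have h : HasFDerivAt (fun z => j z c)
      ((EuclideanSpace.proj c : E2 →L[ℝ] ℝ) ∘L fderiv ℝ j x) x :=
    (EuclideanSpace.proj c : E2 →L[ℝ] ℝ).hasFDerivAt.comp x hj.hasFDerivAt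
  simp [pd, h.fderiv]

theorem pd_comp {f : E2 → ℝ} {j : E2 → E2} {x : E2} (hf : DifferentiableAt ℝ f (j x))
    (hj : DifferentiableAt ℝ j x) (b : Fin 2) :
    pd b (fun z => f (j z)) x = ∑ c, pd b (fun z => j z c) x * pd c f (j x) := by
  simp only [pd_coord hj]
  rw [pd, show (fun z => f (j z)) = f ∘ j from rfl, fderiv_comp x hf hj,
    ContinuousLinearMap.comp_apply, fderiv_apply_eq_sum_pd]

theorem pd_sum_mul {ι : Type*} [Fintype ι] {f g : ι → E2 → ℝ} {x : E2}
    (hf : ∀ c, DifferentiableAt ℝ (f c) x) (hg : ∀ c, DifferentiableAt ℝ (g c) x) (a : Fin 2) :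
    pd a (fun z => ∑ c, f c z * g c z) x
      = ∑ c, (pd a (f c) x * g c x + f c x * pd a (g c) x) := by
  have h : HasFDerivAt (fun z => ∑ c, f c z * g c z)
      (∑ c, (f c x • fderiv ℝ (g c) x + g c x • fderiv ℝ (f c) x)) x :=
    HasFDerivAt.fun_sum fun c _ => (hf c).hasFDerivAt.mul (hg c).hasFDerivAt
  simp only [pd, h.fderiv, _root_.sum_apply, _root_.add_apply,
    _root_.smul_apply, smul_eq_mul]
  exact Finset.sum_congr rfl fun c _ => by ring

theorem ContDiffAt.differentiableAt_pd {f : E2 → ℝ} {x : E2} (hf : ContDiffAt ℝ 2 f x)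
    (c : Fin 2) : DifferentiableAt ℝ (pd c f) x :=
  ((hf.fderiv_right le_rfl).differentiableAt one_ne_zero).clm_apply (differentiableAt_const _)

theorem ContDiffAt.pd_pd_eq_fderiv_fderiv {f : E2 → ℝ} {x : E2} (hf : ContDiffAt ℝ 2 f x)
    (a b : Fin 2) : pd a (pd b f) x = fderiv ℝ (fderiv ℝ f) x (e2 a) (e2 b) := by
  have h : HasFDerivAt (pd b f)
      (ContinuousLinearMap.apply ℝ ℝ (e2 b) ∘L fderiv ℝ (fderiv ℝ f) x) x :=
    (ContinuousLinearMap.apply ℝ ℝ (e2 b)).hasFDerivAt.comp x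
      ((hf.fderiv_right le_rfl).differentiableAt one_ne_zero).hasFDerivAt
  rw [pd, h.fderiv]
  rfl

theorem ContDiffAt.pd_pd_comm {f : E2 → ℝ} {x : E2} (hf : ContDiffAt ℝ 2 f x) (a b : Fin 2) :
    pd a (pd b f) x = pd b (pd a f) x := by
  rw [hf.pd_pd_eq_fderiv_fderiv, hf.pd_pd_eq_fderiv_fderiv]
  exact hf.isSymmSndFDerivAt (by simp) (e2 a) (e2 b)

theorem hess_comp {f : E2 → ℝ} {j : E2 → E2} {x : E2} (hf : ContDiffAt ℝ 2 f (j x))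
    (hj : ContDiffAt ℝ 2 j x) :
    hess (fun z => f (j z)) x = (Dmat2 j x)ᵀ * hess f (j x) * Dmat2 j x
      + ∑ c, pd c f (j x) • hess (fun z => j z c) x := by
  have hj_diff : ∀ᶠ z in 𝓝 x, DifferentiableAt ℝ j z :=
    (hj.eventually (by simp)).mono fun _ h => h.differentiableAt two_ne_zero
  have hf_diff : ∀ᶠ z in 𝓝 x, DifferentiableAt ℝ f (j z) :=
    hj.continuousAt.eventually
      ((hf.eventually (by simp)).mono fun _ h => h.differentiableAt two_ne_zero)
  have hj_coord : ∀ c, ContDiffAt ℝ 2 (fun z => j z c) x := (contDiffAt_piLp 2).1 hj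
  have hfirst (b : Fin 2) : pd b (fun z => f (j z))
      =ᶠ[𝓝 x] fun z => ∑ c, pd b (fun w => j w c) z * pd c f (j z) :=
    (hj_diff.and hf_diff).mono fun z hz => pd_comp hz.2 hz.1 b
  have hinner (a c : Fin 2) : pd a (fun z => pd c f (j z)) x
      = ∑ d, pd a (fun z => j z d) x * pd d (pd c f) (j x) :=
    pd_comp (hf.differentiableAt_pd c) (hj.differentiableAt two_ne_zero) a
  ext a b
  rw [hess, of_apply, pd, (hfirst b).fderiv_eq, ← pd,
    pd_sum_mul (f := fun c z => pd b (fun w => j w c) z) (g := fun c z => pd c f (j z))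
      (fun c => (hj_coord c).differentiableAt_pd b)
      (fun c => (hf.differentiableAt_pd c).comp x (hj.differentiableAt two_ne_zero))]
  simp only [hinner, Matrix.add_apply, mul_apply, Matrix.sum_apply, Matrix.smul_apply, Dmat2,
    hess, of_apply, transpose_apply, smul_eq_mul, Finset.mul_sum, Finset.sum_mul]
  rw [Finset.sum_add_distrib, add_comm]
  congr 1 <;> refine Finset.sum_congr rfl fun c _ => ?_
  · exact Finset.sum_congr rfl fun d _ => by ring
  · ring

theorem eq_zero_of_symm_of_antisymm {κ : Type*} {T : κ → κ → κ → ℝ}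
    (hsymm : ∀ k m n, T k m n = T k n m) (hanti : ∀ k m n, T k m n = -T n m k) (k m n : κ) :
    T k m n = 0 := by
  have : T k m n = -T k m n := calc
    T k m n = T k n m := hsymm k m n
    _ = -T m n k := hanti k n m
    _ = -T m k n := by rw [hsymm m n k]
    _ = T n k m := by rw [hanti m k n, neg_neg]
    _ = T n m k := hsymm n k m
    _ = -T k m n := hanti n m k
  linarith

theorem gmet_apply (Y : E2 → E3) (z : E2) (k n : Fin 2) :
    gmet Y z k n = ∑ i, pd k (fun w => Y w i) z * pd n (fun w => Y w i) z := by
  simp [gmet, mul_apply, Dmat]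

theorem pd_gmet_apply {Y : E2 → E3} {p : E2} (hY : ContDiffAt ℝ 2 Y p) (m k n : Fin 2) :
    pd m (fun z => gmet Y z k n) p
      = ∑ i, (pd m (pd k (fun w => Y w i)) p * pd n (fun w => Y w i) p
        + pd k (fun w => Y w i) p * pd m (pd n (fun w => Y w i)) p) := by
  have hYi : ∀ i, ContDiffAt ℝ 2 (fun z => Y z i) p := (contDiffAt_piLp 2).1 hY
  simp only [gmet_apply]
  exact pd_sum_mul (fun i => (hYi i).differentiableAt_pd k)
    (fun i => (hYi i).differentiableAt_pd n) m

theorem sum_smul_hess_eq_zero_of_gmet_eq_one {Y : E2 → E3} {p : E2} (hY : ContDiffAt ℝ 2 Y p)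
    (hg : gmet Y =ᶠ[𝓝 p] 1) (k : Fin 2) :
    ∑ i, Dmat Y p i k • hess (fun z => Y z i) p = 0 := by
  have hYi : ∀ i, ContDiffAt ℝ 2 (fun z => Y z i) p := (contDiffAt_piLp 2).1 hY
  have hconst (m k n : Fin 2) : pd m (fun z => gmet Y z k n) p = 0 := by
    have h : (fun z => gmet Y z k n) =ᶠ[𝓝 p] fun _ => (1 : Matrix (Fin 2) (Fin 2) ℝ) k n :=
      hg.mono fun z hz => congrFun (congrFun hz k) n
    rw [pd, h.fderiv_eq]
    simp
  ext m n
  simp only [Matrix.sum_apply, Matrix.smul_apply, Dmat, hess, of_apply, smul_eq_mul,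
    Matrix.zero_apply]
  refine eq_zero_of_symm_of_antisymm
    (T := fun k m n => ∑ i, pd k (fun z => Y z i) p * pd m (pd n (fun z => Y z i)) p) ?_ ?_ k m n
  · intro a b c
    simp only [(hYi _).pd_pd_comm b c]
  · intro a b c
    rw [eq_neg_iff_add_eq_zero, ← hconst b c a, pd_gmet_apply hY, ← Finset.sum_add_distrib]
    exact Finset.sum_congr rfl fun i _ => by ring

theorem dotProduct_self_add_mulVec {ι κ : Type*} [Fintype ι] [Fintype κ] [DecidableEq κ]
    {D : Matrix ι κ ℝ} (hD : Dᵀ * D = 1) {α : ι → ℝ} (hα : α ᵥ* D = 0) (β : κ → ℝ) :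
    (α + D *ᵥ β) ⬝ᵥ (α + D *ᵥ β) = α ⬝ᵥ α + β ⬝ᵥ β := by
  have hcross : α ⬝ᵥ (D *ᵥ β) = 0 := by rw [dotProduct_mulVec, hα, zero_dotProduct]
  have hnorm : (D *ᵥ β) ⬝ᵥ (D *ᵥ β) = β ⬝ᵥ β := by
    rw [dotProduct_mulVec, ← vecMul_transpose, vecMul_vecMul, hD, vecMul_one]
  rw [add_dotProduct, dotProduct_add, dotProduct_add, dotProduct_comm (D *ᵥ β) α, hcross,
    hnorm]
  ring

theorem sum_frob2_eq_sum_dotProduct {ι m n : Type*} [Fintype ι] [Fintype m] [Fintype n]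
    (M : ι → Matrix m n ℝ) :
    ∑ i, frob2 (M i) = ∑ a, ∑ b, (fun i => M i a b) ⬝ᵥ (fun i => M i a b) := by
  simp only [frob2, dotProduct, sq]
  rw [Finset.sum_comm]
  exact Finset.sum_congr rfl fun a _ => Finset.sum_comm

theorem sum_frob2_add_sum_smul {ι κ m n : Type*} [Fintype ι] [Fintype κ] [Fintype m]
    [Fintype n] [DecidableEq κ] {D : Matrix ι κ ℝ} (hD : Dᵀ * D = 1) {A : ι → Matrix m n ℝ}
    (hA : ∀ c, ∑ i, D i c • A i = 0) (B : κ → Matrix m n ℝ) :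
    ∑ i, frob2 (A i + ∑ c, D i c • B c) = ∑ i, frob2 (A i) + ∑ c, frob2 (B c) := by
  simp only [sum_frob2_eq_sum_dotProduct, ← Finset.sum_add_distrib]
  refine Finset.sum_congr rfl fun a _ => Finset.sum_congr rfl fun b _ => ?_
  have hα : (fun i => A i a b) ᵥ* D = 0 := by
    ext c
    simpa [vecMul, dotProduct, mul_comm, Matrix.sum_apply] using congrFun (congrFun (hA c) a) b
  convert dotProduct_self_add_mulVec hD hα (fun c => B c a b) using 2 <;>
    ext i <;> simp [mulVec, dotProduct, Matrix.sum_apply]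

/-- pointwise Pythagoras identity for the second derivative of the
composition of an isometric immersion with a reparametrization. -/
theorem stmt_17 (U V : Set E2) (hU : IsOpen U) (hV : IsOpen V)
    (Y : E2 → E3) (hY : ContDiffOn ℝ 2 Y U)
    (hiso : ∀ x ∈ U, gmet Y x = 1)
    (j : E2 → E2) (hj : ContDiffOn ℝ 2 j V) (hmaps : Set.MapsTo j V U) :
    ∀ x ∈ V,
      hessNormSq (fun z => Y (j z)) x
        = (∑ i : Fin 3,
            frob2 ((Dmat2 j x)ᵀ * hess (fun z => Y z i) (j x) * Dmat2 j x))
          + hessNormSq2 j x := by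
  intro x hx
  have hYjx : ContDiffAt ℝ 2 Y (j x) := hY.contDiffAt (hU.mem_nhds (hmaps hx))
  have hg : gmet Y =ᶠ[𝓝 (j x)] 1 := eventually_of_mem (hU.mem_nhds (hmaps hx)) hiso
  have hcomp (i : Fin 3) : hess (fun z => Y (j z) i) x
      = (Dmat2 j x)ᵀ * hess (fun z => Y z i) (j x) * Dmat2 j x
        + ∑ c, Dmat Y (j x) i c • hess (fun z => j z c) x :=
    hess_comp ((contDiffAt_piLp 2).1 hYjx i) (hj.contDiffAt (hV.mem_nhds hx))
  have hortho (c : Fin 2) : ∑ i, Dmat Y (j x) i c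
      • ((Dmat2 j x)ᵀ * hess (fun z => Y z i) (j x) * Dmat2 j x) = 0 := by
    calc _ = (Dmat2 j x)ᵀ * (∑ i, Dmat Y (j x) i c • hess (fun z => Y z i) (j x))
          * Dmat2 j x := by
          simp only [Finset.mul_sum, Finset.sum_mul, Matrix.mul_smul, Matrix.smul_mul]
      _ = 0 := by
          rw [sum_smul_hess_eq_zero_of_gmet_eq_one hYjx hg c, Matrix.mul_zero, Matrix.zero_mul]
  rw [hessNormSq, hessNormSq2, Finset.sum_congr rfl fun i _ => congrArg frob2 (hcomp i)]
  exact sum_frob2_add_sum_smul (hiso _ (hmaps hx)) hortho _
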